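/- If ε has finite second moment and τ ∈ (0,1), then b ↦ E[ρ_τ(ε - b)] for the expectile loss ρ_τ(u) = |τ - 1_{u<0}|u² is strictly convex and has a unique minimizer b*, characterized by E[g_τ(ε - b*)] = 0 where g_τ(u) = 2τ u 1_{u≥0} + 2(1-τ) u 1_{u<0}. -/

import Mathlib

/-!
The risk `R(b) = E[ρ_τ(ε - b)]` is differentiable with `R'(b) = -E[g_τ(ε - b)]`, by
differentiation under the integral sign with the domination `|g_τ(u)| ≤ C |u|`. Since
`g_τ(v) - g_τ(u) ≥ 2 min(τ, 1 - τ) (v - u)` for `u ≤ v`, the derivative `R'` grows at least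
linearly: `R` is strictly convex, `R'` changes sign and so vanishes somewhere by Darboux's theorem,
and for a differentiable convex function the minimizers are exactly the critical points.
-/

open MeasureTheory

/-- The expectile loss `ρ_τ(u) = τ u² 1_{u≥0} + (1-τ) u² 1_{u<0}`. -/
noncomputable def expectileLoss (τ u : ℝ) : ℝ :=
  τ * u ^ 2 * (if 0 ≤ u then 1 else 0) + (1 - τ) * u ^ 2 * (if u < 0 then 1 else 0)

/-- Its derivative `g_τ(u) = 2τ u 1_{u≥0} + 2(1-τ) u 1_{u<0}`. -/
noncomputable def expectileScore (τ u : ℝ) : ℝ :=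
  2 * τ * u * (if 0 ≤ u then 1 else 0) + 2 * (1 - τ) * u * (if u < 0 then 1 else 0)

open Set

section Loss

variable {τ u : ℝ}

lemma expectileLoss_of_nonneg (hu : 0 ≤ u) : expectileLoss τ u = τ * u ^ 2 := by
  simp [expectileLoss, hu, not_lt.2 hu]

lemma expectileLoss_of_nonpos (hu : u ≤ 0) : expectileLoss τ u = (1 - τ) * u ^ 2 := by
  rcases hu.lt_or_eq with hu | rfl
  · simp [expectileLoss, hu, not_le.2 hu]
  · simp [expectileLoss]

lemma expectileScore_of_nonneg (hu : 0 ≤ u) : expectileScore τ u = 2 * τ * u := by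
  simp [expectileScore, hu, not_lt.2 hu]

lemma expectileScore_of_neg (hu : u < 0) : expectileScore τ u = 2 * (1 - τ) * u := by
  simp [expectileScore, hu, not_le.2 hu]

lemma hasDerivAt_expectileLoss (τ u : ℝ) :
    HasDerivAt (expectileLoss τ) (expectileScore τ u) u := by
  have hsq (c : ℝ) : HasDerivAt (fun x : ℝ => c * x ^ 2) (2 * c * u) u := by
    simpa [mul_comm, mul_left_comm] using (hasDerivAt_pow 2 u).const_mul c
  rcases lt_trichotomy u 0 with hu | rfl | hu
  · rw [expectileScore_of_neg hu]
    refine (hsq (1 - τ)).congr_of_eventuallyEq ?_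
    filter_upwards [Iio_mem_nhds hu] with x hx using expectileLoss_of_nonpos hx.le
  · -- the two quadratic branches meet at 0 with common slope 0
    have hleft : HasDerivWithinAt (expectileLoss τ) (expectileScore τ 0) (Iic 0) 0 := by
      refine ((hsq (1 - τ)).hasDerivWithinAt.congr (fun x hx => expectileLoss_of_nonpos hx)
        (expectileLoss_of_nonpos le_rfl)).congr_deriv ?_
      simp [expectileScore]
    have hright : HasDerivWithinAt (expectileLoss τ) (expectileScore τ 0) (Ici 0) 0 := by
      refine ((hsq τ).hasDerivWithinAt.congr (fun x hx => expectileLoss_of_nonneg hx)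
        (expectileLoss_of_nonneg le_rfl)).congr_deriv ?_
      simp [expectileScore]
    simpa [Iic_union_Ici] using hleft.union hright
  · rw [expectileScore_of_nonneg hu.le]
    refine (hsq τ).congr_of_eventuallyEq ?_
    filter_upwards [Ioi_mem_nhds hu] with x hx using expectileLoss_of_nonneg hx.le

lemma continuous_expectileLoss (τ : ℝ) : Continuous (expectileLoss τ) :=
  continuous_iff_continuousAt.2 fun u => (hasDerivAt_expectileLoss τ u).continuousAt

lemma measurable_expectileScore (τ : ℝ) : Measurable (expectileScore τ) := by
  have h₁ : Measurable fun u : ℝ => if 0 ≤ u then (1 : ℝ) else 0 :=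
    Measurable.ite measurableSet_Ici measurable_const measurable_const
  have h₂ : Measurable fun u : ℝ => if u < 0 then (1 : ℝ) else 0 :=
    Measurable.ite measurableSet_Iio measurable_const measurable_const
  unfold expectileScore
  fun_prop

lemma abs_expectileLoss_le (τ u : ℝ) : |expectileLoss τ u| ≤ max |τ| |1 - τ| * u ^ 2 := by
  rcases le_or_gt 0 u with hu | hu
  · rw [expectileLoss_of_nonneg hu, abs_mul, abs_of_nonneg (sq_nonneg u)]
    exact mul_le_mul_of_nonneg_right (le_max_left _ _) (sq_nonneg u)
  · rw [expectileLoss_of_nonpos hu.le, abs_mul, abs_of_nonneg (sq_nonneg u)]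
    exact mul_le_mul_of_nonneg_right (le_max_right _ _) (sq_nonneg u)

lemma abs_expectileScore_le (τ u : ℝ) : |expectileScore τ u| ≤ 2 * max |τ| |1 - τ| * |u| := by
  rcases le_or_gt 0 u with hu | hu
  · rw [expectileScore_of_nonneg hu, abs_mul, abs_mul, abs_two]
    gcongr
    exact le_max_left _ _
  · rw [expectileScore_of_neg hu, abs_mul, abs_mul, abs_two]
    gcongr
    exact le_max_right _ _

lemma expectileScore_sub_ge (τ : ℝ) {u v : ℝ} (huv : u ≤ v) :
    2 * min τ (1 - τ) * (v - u) ≤ expectileScore τ v - expectileScore τ u := by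
  have hτ : min τ (1 - τ) ≤ τ := min_le_left _ _
  have hτ' : min τ (1 - τ) ≤ 1 - τ := min_le_right _ _
  rcases le_or_gt 0 u with hu | hu
  · rw [expectileScore_of_nonneg hu, expectileScore_of_nonneg (hu.trans huv)]
    nlinarith
  rcases le_or_gt 0 v with hv | hv
  · rw [expectileScore_of_neg hu, expectileScore_of_nonneg hv]
    nlinarith
  · rw [expectileScore_of_neg hu, expectileScore_of_neg hv]
    nlinarith

end Loss

section CriticalPoint

variable {f f' : ℝ → ℝ}

lemma strictConvexOn_univ_of_hasDerivAt (hf : ∀ x, HasDerivAt f (f' x) x)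
    (hf' : StrictMono f') : StrictConvexOn ℝ univ f := by
  have hderiv : deriv f = f' := funext fun x => (hf x).deriv
  exact StrictMono.strictConvexOn_univ_of_deriv
    (continuous_iff_continuousAt.2 fun x => (hf x).continuousAt) (hderiv ▸ hf')

lemma ConvexOn.isMinOn_univ_iff_of_hasDerivAt (hconv : ConvexOn ℝ univ f) {x : ℝ}
    (hf : HasDerivAt f (f' x) x) : IsMinOn f univ x ↔ f' x = 0 := by
  refine ⟨fun hmin => (hmin.isLocalMin Filter.univ_mem).hasDerivAt_eq_zero hf, fun h0 => ?_⟩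
  refine hconv.isMinOn_of_rightDeriv_eq_zero (by simp) ?_
  rw [(hf.hasDerivWithinAt (s := Ioi x)).derivWithin (uniqueDiffWithinAt_Ioi x), h0]

lemma exists_eq_zero_of_hasDerivAt_of_growth {c : ℝ} (hf : ∀ x, HasDerivAt f (f' x) x)
    (hc : 0 < c) (hgrowth : ∀ x y, x ≤ y → c * (y - x) ≤ f' y - f' x) : ∃ x, f' x = 0 := by
  set r := |f' 0| / c
  have hr : 0 ≤ r := by positivity
  have hcr : c * r = |f' 0| := mul_div_cancel₀ _ hc.ne'
  have hneg : f' (-r) ≤ 0 := by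
    have := hgrowth (-r) 0 (by linarith)
    linarith [le_abs_self (f' 0)]
  have hpos : 0 ≤ f' r := by
    have := hgrowth 0 r hr
    linarith [neg_abs_le (f' 0)]
  obtain ⟨x, -, hx⟩ := exists_hasDerivWithinAt_eq_of_ge_of_le (by linarith)
    (fun x _ => (hf x).hasDerivWithinAt) hneg hpos
  exact ⟨x, hx⟩

end CriticalPoint

section Risk

variable {Ω : Type*} [MeasurableSpace Ω] {μ : Measure Ω} {X : Ω → ℝ}

noncomputable def expectileRisk (μ : Measure Ω) (τ : ℝ) (X : Ω → ℝ) (b : ℝ) : ℝ :=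
  ∫ ω, expectileLoss τ (X ω - b) ∂μ

lemma MeasureTheory.MemLp.integrable_expectileLoss_comp (τ : ℝ) (hX : MemLp X 2 μ) :
    Integrable (fun ω => expectileLoss τ (X ω)) μ := by
  refine (hX.integrable_sq.const_mul (max |τ| |1 - τ|)).mono'
    ((continuous_expectileLoss τ).comp_aestronglyMeasurable hX.1) (ae_of_all _ fun ω => ?_)
  exact abs_expectileLoss_le τ (X ω)

lemma MeasureTheory.Integrable.expectileScore_comp (τ : ℝ) (hX : Integrable X μ) :
    Integrable (fun ω => expectileScore τ (X ω)) μ := by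
  refine (hX.abs.const_mul (2 * max |τ| |1 - τ|)).mono'
    ((measurable_expectileScore τ).comp_aemeasurable hX.aemeasurable).aestronglyMeasurable
    (ae_of_all _ fun ω => ?_)
  exact abs_expectileScore_le τ (X ω)

lemma hasDerivAt_expectileRisk [IsFiniteMeasure μ] (τ : ℝ) (hX : MemLp X 2 μ) (b₀ : ℝ) :
    HasDerivAt (expectileRisk μ τ X) (-∫ ω, expectileScore τ (X ω - b₀) ∂μ) b₀ := by
  have hXb (b : ℝ) : MemLp (fun ω => X ω - b) 2 μ := hX.sub (memLp_const b)
  set C := 2 * max |τ| |1 - τ|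
  have hdom : ∀ᵐ ω ∂μ, ∀ b ∈ Metric.ball b₀ 1,
      ‖-expectileScore τ (X ω - b)‖ ≤ C * (|X ω| + (|b₀| + 1)) := by
    refine ae_of_all _ fun ω b hb => ?_
    have hb' : |b| ≤ |b₀| + 1 := by
      have := abs_sub_abs_le_abs_sub b b₀
      rw [Metric.mem_ball, Real.dist_eq] at hb
      linarith
    rw [norm_neg, Real.norm_eq_abs]
    refine (abs_expectileScore_le τ _).trans (mul_le_mul_of_nonneg_left ?_ (by positivity))
    linarith [abs_sub (X ω) b]
  have h := hasDerivAt_integral_of_dominated_loc_of_deriv_le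
    (F := fun b ω => expectileLoss τ (X ω - b)) (Metric.ball_mem_nhds b₀ one_pos)
    (Filter.Eventually.of_forall fun b => ((hXb b).integrable_expectileLoss_comp τ).1)
    ((hXb b₀).integrable_expectileLoss_comp τ)
    (((hXb b₀).integrable one_le_two).expectileScore_comp τ).1.neg hdom
    ((hX.integrable one_le_two).abs.add (integrable_const _) |>.const_mul C)
    (ae_of_all _ fun ω b _ => (hasDerivAt_expectileLoss τ (X ω - b)).comp_const_sub (X ω) b)
  rw [← integral_neg]
  exact h.2

lemma integral_expectileScore_sub_ge [IsProbabilityMeasure μ] (τ : ℝ) (hX : Integrable X μ)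
    {b b' : ℝ} (hbb' : b ≤ b') :
    2 * min τ (1 - τ) * (b' - b) ≤
      ∫ ω, expectileScore τ (X ω - b) ∂μ - ∫ ω, expectileScore τ (X ω - b') ∂μ := by
  have hint (b : ℝ) : Integrable (fun ω => expectileScore τ (X ω - b)) μ :=
    (hX.sub (integrable_const b)).expectileScore_comp τ
  rw [← integral_sub (hint b) (hint b')]
  calc 2 * min τ (1 - τ) * (b' - b) = ∫ _, 2 * min τ (1 - τ) * (b' - b) ∂μ := by simp
    _ ≤ _ := integral_mono (integrable_const _) ((hint b).sub (hint b')) fun ω => by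
      simpa using expectileScore_sub_ge τ (sub_le_sub_left hbb' (X ω))

end Risk

theorem expectileLoss_strictConvex_unique_min_general {Ω : Type*} [MeasurableSpace Ω] (μ : Measure Ω)
    [IsProbabilityMeasure μ] (τ : ℝ) (hτ : τ ∈ Set.Ioo (0 : ℝ) 1)
    (ε : Ω → ℝ) (hL2 : MemLp ε 2 μ) :
    StrictConvexOn ℝ Set.univ (fun b : ℝ => ∫ ω, expectileLoss τ (ε ω - b) ∂μ) ∧
    (∃! b : ℝ, IsMinOn (fun b : ℝ => ∫ ω, expectileLoss τ (ε ω - b) ∂μ) Set.univ b) ∧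
    (∀ b : ℝ, IsMinOn (fun b : ℝ => ∫ ω, expectileLoss τ (ε ω - b) ∂μ) Set.univ b ↔
      ∫ ω, expectileScore τ (ε ω - b) ∂μ = 0) := by
  set f' : ℝ → ℝ := fun b => -∫ ω, expectileScore τ (ε ω - b) ∂μ
  have hf (b : ℝ) : HasDerivAt (expectileRisk μ τ ε) (f' b) b :=
    hasDerivAt_expectileRisk τ hL2 b
  have hc : 0 < 2 * min τ (1 - τ) := by
    have := lt_min hτ.1 (sub_pos.2 hτ.2)
    positivity
  have hgrowth (b b' : ℝ) (hbb' : b ≤ b') : 2 * min τ (1 - τ) * (b' - b) ≤ f' b' - f' b := by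
    simpa [f', sub_eq_add_neg, add_comm] using
      integral_expectileScore_sub_ge τ (hL2.integrable one_le_two) hbb'
  have hconv : StrictConvexOn ℝ univ (expectileRisk μ τ ε) :=
    strictConvexOn_univ_of_hasDerivAt hf fun b b' hbb' => by
      nlinarith [hgrowth b b' hbb'.le, mul_pos hc (sub_pos.2 hbb')]
  have hmin (b : ℝ) : IsMinOn (expectileRisk μ τ ε) univ b ↔
      ∫ ω, expectileScore τ (ε ω - b) ∂μ = 0 :=
    (hconv.convexOn.isMinOn_univ_iff_of_hasDerivAt (hf b)).trans neg_eq_zero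
  obtain ⟨b, hb⟩ := exists_eq_zero_of_hasDerivAt_of_growth hf hc hgrowth
  have hbmin : IsMinOn (expectileRisk μ τ ε) univ b := (hmin b).2 (neg_eq_zero.1 hb)
  exact ⟨hconv, ⟨b, hbmin, fun y hy => hconv.eq_of_isMinOn hy hbmin trivial trivial⟩, hmin⟩

/-- If ε has finite second moment and τ ∈ (0,1), then `b ↦ E[ρ_τ(ε - b)]` is strictly convex
with a unique minimizer `b*`, characterized by `E[g_τ(ε - b*)] = 0`. -/
theorem expectileLoss_strictConvex_unique_min {Ω : Type*} [MeasurableSpace Ω] (μ : Measure Ω)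
    [IsProbabilityMeasure μ] (τ : ℝ) (hτ : τ ∈ Set.Ioo (0 : ℝ) 1)
    (ε : Ω → ℝ) (hmeas : Measurable ε) (hL2 : MemLp ε 2 μ) :
    StrictConvexOn ℝ Set.univ (fun b : ℝ => ∫ ω, expectileLoss τ (ε ω - b) ∂μ) ∧
    (∃! b : ℝ, IsMinOn (fun b : ℝ => ∫ ω, expectileLoss τ (ε ω - b) ∂μ) Set.univ b) ∧
    (∀ b : ℝ, IsMinOn (fun b : ℝ => ∫ ω, expectileLoss τ (ε ω - b) ∂μ) Set.univ b ↔
      ∫ ω, expectileScore τ (ε ω - b) ∂μ = 0) :=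
  expectileLoss_strictConvex_unique_min_general μ τ hτ ε hL2
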